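/- arXiv:1912.02768 — 3 statements merged into one kernel-verified Lean document; each statement's English description precedes it below -/
import Mathlib

section
/- For the function f on [-1,1] defined by f(x) = -1/2 for x in [-1,-1/2], f(x) = x for x in [-1/2,1/2], and f(x) = 1/2 for x in [1/2,1], the value c minimizing ∫_{-1}^{1} (f(x) - c·x)² dx over c ∈ ℝ is c = 11/16. -/
/-- The piecewise function f(x) = -1/2 on [-1,-1/2], x on [-1/2,1/2], 1/2 on [1/2,1]. -/
noncomputable def fClip (x : ℝ) : ℝ := max (-(1/2)) (min (1/2) x)

/-- The squared L² error on [-1,1] of fitting f by x ↦ c·x. -/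
noncomputable def Eclip (c : ℝ) : ℝ := ∫ x in (-1:ℝ)..1, (fClip x - c * x) ^ 2

lemma fClip_cont : Continuous fClip := by
  exact continuous_const.max (continuous_const.min continuous_id)

lemma int_x_f : ∫ x in (-1:ℝ)..1, x * fClip x = 11/24 := by
  have hI : ∀ a b : ℝ, IntervalIntegrable (fun x => x * fClip x) MeasureTheory.volume a b :=
    fun a b => (continuous_id.mul fClip_cont).intervalIntegrable a b
  have h1 : ∫ x in (-1:ℝ)..(-(1/2)), x * fClip x = 3/16 := by
    rw [intervalIntegral.integral_congr (g := fun x => x * (-(1/2)))]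
    · rw [intervalIntegral.integral_mul_const, integral_id]; norm_num
    · intro x hx
      rw [Set.uIcc_of_le (by norm_num)] at hx
      simp only [fClip]
      rw [min_eq_right (by linarith [hx.2]), max_eq_left (by linarith [hx.2])]
  have h2 : ∫ x in (-(1/2):ℝ)..(1/2), x * fClip x = 1/12 := by
    rw [intervalIntegral.integral_congr (g := fun x => x ^ 2)]
    · rw [integral_pow]; norm_num
    · intro x hx
      rw [Set.uIcc_of_le (by norm_num)] at hx
      simp only [fClip]
      rw [min_eq_right hx.2, max_eq_right hx.1, sq]
  have h3 : ∫ x in (1/2:ℝ)..1, x * fClip x = 3/16 := by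
    rw [intervalIntegral.integral_congr (g := fun x => x * (1/2))]
    · rw [intervalIntegral.integral_mul_const, integral_id]; norm_num
    · intro x hx
      rw [Set.uIcc_of_le (by norm_num)] at hx
      simp only [fClip]
      rw [min_eq_left hx.1]
      norm_num
  have e1 := intervalIntegral.integral_add_adjacent_intervals (hI (-1) (-(1/2))) (hI (-(1/2)) (1/2))
  have e2 := intervalIntegral.integral_add_adjacent_intervals (hI (-1) (1/2)) (hI (1/2) 1)
  rw [← e2, ← e1, h1, h2, h3]; norm_num

lemma Eclip_eq (c : ℝ) : Eclip c = Eclip 0 - (11/12)*c + (2/3)*c^2 := by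
  have h0 : Eclip 0 = ∫ x in (-1:ℝ)..1, fClip x ^ 2 := by
    unfold Eclip; simp
  unfold Eclip
  have key : (fun x => (fClip x - c * x) ^ 2)
      = fun x => (fClip x ^ 2 - (2*c) * (x * fClip x)) + c^2 * x^2 := by
    funext x; ring
  rw [key, intervalIntegral.integral_add, intervalIntegral.integral_sub,
    intervalIntegral.integral_const_mul, intervalIntegral.integral_const_mul,
    int_x_f, integral_pow]
  · simp only [zero_mul, sub_zero]; push_cast; ring
  · exact (fClip_cont.pow 2).intervalIntegrable _ _
  · exact (continuous_const.mul (continuous_id.mul fClip_cont)).intervalIntegrable _ _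
  · exact ((fClip_cont.pow 2).sub (continuous_const.mul (continuous_id.mul fClip_cont))).intervalIntegrable _ _
  · exact (continuous_const.mul (continuous_pow 2)).intervalIntegrable _ _

theorem stmt_0 :
    (∀ c : ℝ, Eclip (11/16) ≤ Eclip c) ∧
    (∀ c : ℝ, (∀ c' : ℝ, Eclip c ≤ Eclip c') → c = 11/16) := by
  have hmin : ∀ c : ℝ, Eclip (11/16) ≤ Eclip c := by
    intro c
    rw [Eclip_eq c, Eclip_eq (11/16)]
    nlinarith [sq_nonneg (c - 11/16)]
  refine ⟨hmin, fun c h => ?_⟩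
  have h1 := h (11/16)
  have h2 := hmin c
  rw [Eclip_eq c, Eclip_eq (11/16)] at h1 h2
  have hsq : (c - 11/16)^2 = 0 := by nlinarith
  have := pow_eq_zero_iff (n := 2) (by norm_num) |>.mp hsq
  linarith
end

section
/- Let f be as above (f(x) = -1/2, x, 1/2 on the three pieces of [-1,1]). Then ∫_{-1}^{1} (f(x) - (11/16)·x)² dx ≤ ∫_{-1}^{1} (f(x) - c·x)² dx for every c ∈ ℝ, and 11/16 > max_{x∈[-1,1]} f(x) = 1/2. -/
/-!
The squared error `E(c) = ∫ (f - c x)²` is a quadratic in `c` with leading coefficient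
`∫ x² = 2/3 > 0`, so it is minimised exactly where the normal equation `c ∫ x² = ∫ x f(x)`
holds. Splitting `[-1, 1]` at `±1/2` gives `∫ x f(x) = 11/24`, hence the minimiser is
`(11/24) / (2/3) = 11/16`, which exceeds `max f = 1/2`.
-/

open intervalIntegral MeasureTheory

section LeastSquares

variable {g h : ℝ → ℝ} {a b : ℝ}

theorem integral_sq_sub_mul_eq
    (hgg : IntervalIntegrable (fun x => g x ^ 2) volume a b)
    (hgh : IntervalIntegrable (fun x => g x * h x) volume a b)
    (hhh : IntervalIntegrable (fun x => h x ^ 2) volume a b) (c : ℝ) :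
    ∫ x in a..b, (g x - c * h x) ^ 2 =
      (∫ x in a..b, g x ^ 2) - 2 * c * (∫ x in a..b, g x * h x) +
        c ^ 2 * ∫ x in a..b, h x ^ 2 := by
  have hexp : (fun x => (g x - c * h x) ^ 2) =
      fun x => g x ^ 2 - 2 * c * (g x * h x) + c ^ 2 * h x ^ 2 := by
    ext x; ring
  rw [hexp, integral_add (hgg.sub (hgh.const_mul _)) (hhh.const_mul _),
    integral_sub hgg (hgh.const_mul _), intervalIntegral.integral_const_mul,
    intervalIntegral.integral_const_mul]

theorem integral_sq_sub_mul_le_of_mul_eq (hab : a ≤ b)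
    (hgg : IntervalIntegrable (fun x => g x ^ 2) volume a b)
    (hgh : IntervalIntegrable (fun x => g x * h x) volume a b)
    (hhh : IntervalIntegrable (fun x => h x ^ 2) volume a b) {c₀ : ℝ}
    (hc₀ : c₀ * (∫ x in a..b, h x ^ 2) = ∫ x in a..b, g x * h x) (c : ℝ) :
    ∫ x in a..b, (g x - c₀ * h x) ^ 2 ≤ ∫ x in a..b, (g x - c * h x) ^ 2 := by
  have hpos : 0 ≤ ∫ x in a..b, h x ^ 2 :=
    integral_nonneg hab fun x _ => sq_nonneg (h x)
  rw [integral_sq_sub_mul_eq hgg hgh hhh, integral_sq_sub_mul_eq hgg hgh hhh, ← hc₀]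
  nlinarith [mul_nonneg (sq_nonneg (c - c₀)) hpos]

end LeastSquares

theorem integral_max_min_mul_self :
    ∫ x in (-1 : ℝ)..1, max (-(1 / 2)) (min (1 / 2) x) * x = 11 / 24 := by
  have hint : ∀ a b : ℝ, IntervalIntegrable (fun x : ℝ => max (-(1 / 2)) (min (1 / 2) x) * x)
      volume a b :=
    fun a b => (by fun_prop : Continuous _).intervalIntegrable a b
  rw [← integral_add_adjacent_intervals (hint (-1) (-(1 / 2))) (hint _ 1),
    ← integral_add_adjacent_intervals (hint (-(1 / 2)) (1 / 2)) (hint _ 1)]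
  have hlow : ∫ x in (-1 : ℝ)..(-(1 / 2)), max (-(1 / 2)) (min (1 / 2) x) * x
      = ∫ x in (-1 : ℝ)..(-(1 / 2)), -(1 / 2) * x := by
    refine integral_congr fun x hx => ?_
    rw [Set.uIcc_of_le (by norm_num)] at hx
    rw [min_eq_right (by linarith [hx.2]), max_eq_left hx.2]
  have hmid : ∫ x in (-(1 / 2) : ℝ)..(1 / 2), max (-(1 / 2)) (min (1 / 2) x) * x
      = ∫ x in (-(1 / 2) : ℝ)..(1 / 2), x ^ 2 := by
    refine integral_congr fun x hx => ?_
    rw [Set.uIcc_of_le (by norm_num)] at hx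
    rw [min_eq_right hx.2, max_eq_right hx.1, sq]
  have hhigh : ∫ x in (1 / 2 : ℝ)..1, max (-(1 / 2)) (min (1 / 2) x) * x
      = ∫ x in (1 / 2 : ℝ)..1, 1 / 2 * x := by
    refine integral_congr fun x hx => ?_
    rw [Set.uIcc_of_le (by norm_num)] at hx
    rw [min_eq_left hx.1, max_eq_right (by norm_num)]
  rw [hlow, hmid, hhigh, intervalIntegral.integral_const_mul,
    intervalIntegral.integral_const_mul, integral_id, integral_pow, integral_id]
  norm_num

theorem stmt_1 (f : ℝ → ℝ)
    (hf : ∀ x, f x = max (-(1/2)) (min (1/2) x)) :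
    (∀ c : ℝ, (∫ x in (-1:ℝ)..1, (f x - (11/16) * x) ^ 2) ≤
        ∫ x in (-1:ℝ)..1, (f x - c * x) ^ 2) ∧
    IsGreatest (f '' Set.Icc (-1 : ℝ) 1) (1/2) ∧ (11:ℝ)/16 > 1/2 := by
  obtain rfl : f = fun x => max (-(1 / 2)) (min (1 / 2) x) := funext hf
  have hint : ∀ F : ℝ → ℝ, Continuous F → IntervalIntegrable F volume (-1) 1 :=
    fun F hF => hF.intervalIntegrable _ _
  refine ⟨fun c => ?_, ⟨⟨1 / 2, by norm_num, by norm_num⟩, ?_⟩, by norm_num⟩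
  · refine integral_sq_sub_mul_le_of_mul_eq (h := fun x => x) (by norm_num)
      (hint _ (by fun_prop)) (hint _ (by fun_prop)) (hint _ (by fun_prop)) ?_ c
    rw [integral_max_min_mul_self, integral_pow]
    norm_num
  · rintro y ⟨x, -, rfl⟩
    exact max_le (by norm_num) (min_le_left _ _)
end

section
/- Discrete maximum principle for TV_pwL denoising in 1D: let f ∈ ℝⁿ, γ : Fin (n-1) → ℝ nonnegative, C = max_i f i, c = min_i f i, and J(u) = (1/2)Σᵢ (u i - f i)² + Σⱼ max(|u (j+1) - u j| - γ j, 0). If u minimizes J, then c ≤ u i ≤ C for all i. -/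
private lemma clamp_lip (c C a b : ℝ) :
    |max c (min a C) - max c (min b C)| ≤ |a - b| := by
  have h1 : |max c (min a C) - max c (min b C)| ≤ max |c - c| |min a C - min b C| :=
    abs_max_sub_max_le_max c (min a C) c (min b C)
  have h2 : |min a C - min b C| ≤ max |a - b| |C - C| :=
    abs_min_sub_min_le_max a C b C
  simp only [sub_self, abs_zero] at h1 h2
  calc |max c (min a C) - max c (min b C)| ≤ max 0 |min a C - min b C| := h1
    _ = |min a C - min b C| := max_eq_right (abs_nonneg _)
    _ ≤ max |a - b| 0 := h2
    _ = |a - b| := max_eq_left (abs_nonneg _)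

private lemma clamp_sq_le (c C b x : ℝ) (h1 : c ≤ b) (h2 : b ≤ C) :
    (max c (min x C) - b) ^ 2 ≤ (x - b) ^ 2 := by
  rcases le_total x c with h | h
  · rw [min_eq_left (h.trans (h1.trans h2)), max_eq_left h]
    nlinarith
  · rcases le_total x C with h' | h'
    · rw [min_eq_left h', max_eq_right h]
    · rw [min_eq_right h', max_eq_right (h1.trans h2)]
      nlinarith

private lemma clamp_sq_lt (c C b x : ℝ) (h1 : c ≤ b) (h2 : b ≤ C)
    (hx : x < c ∨ C < x) :
    (max c (min x C) - b) ^ 2 < (x - b) ^ 2 := by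
  rcases hx with h | h
  · rw [min_eq_left (h.le.trans (h1.trans h2)), max_eq_left h.le]
    nlinarith
  · rw [min_eq_right h.le, max_eq_right (h1.trans h2)]
    nlinarith

theorem stmt_11 (n : ℕ) (hn : 1 ≤ n) (f : Fin n → ℝ) (γ : Fin (n - 1) → ℝ)
    (hγ : ∀ j, 0 ≤ γ j) (C c : ℝ)
    (hC : IsGreatest (Set.range f) C) (hc : IsLeast (Set.range f) c)
    (J : (Fin n → ℝ) → ℝ)
    (hJ : ∀ u, J u = (1/2) * ∑ i, (u i - f i) ^ 2 +
      ∑ j : Fin (n - 1),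
        max (|u ⟨j.1 + 1, by have := j.2; omega⟩ - u ⟨j.1, by have := j.2; omega⟩| - γ j) 0)
    (u : Fin n → ℝ) (hu : ∀ v, J u ≤ J v) :
    ∀ i, c ≤ u i ∧ u i ≤ C := by
  intro i0
  by_contra hcon
  push_neg at hcon
  have hfc : ∀ i, c ≤ f i := fun i => hc.2 ⟨i, rfl⟩
  have hfC : ∀ i, f i ≤ C := fun i => hC.2 ⟨i, rfl⟩
  set v : Fin n → ℝ := fun i => max c (min (u i) C) with hv
  have hviol : u i0 < c ∨ C < u i0 := by
    rcases lt_or_ge (u i0) c with h | h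
    · exact Or.inl h
    · exact Or.inr (hcon h)
  have hJv : J v < J u := by
    rw [hJ, hJ]
    have hsum : ∑ i, (v i - f i) ^ 2 < ∑ i, (u i - f i) ^ 2 := by
      refine Finset.sum_lt_sum (fun i _ => ?_) ⟨i0, Finset.mem_univ _, ?_⟩
      · exact clamp_sq_le c C (f i) (u i) (hfc i) (hfC i)
      · exact clamp_sq_lt c C (f i0) (u i0) (hfc i0) (hfC i0) hviol
    have htv : ∀ j : Fin (n - 1),
        max (|v ⟨j.1 + 1, by have := j.2; omega⟩ - v ⟨j.1, by have := j.2; omega⟩| - γ j) 0 ≤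
        max (|u ⟨j.1 + 1, by have := j.2; omega⟩ - u ⟨j.1, by have := j.2; omega⟩| - γ j) 0 := by
      intro j
      exact max_le_max (sub_le_sub_right (clamp_lip c C _ _) _) le_rfl
    have h2 : ∑ j : Fin (n - 1),
        max (|v ⟨j.1 + 1, by have := j.2; omega⟩ - v ⟨j.1, by have := j.2; omega⟩| - γ j) 0 ≤
        ∑ j : Fin (n - 1),
        max (|u ⟨j.1 + 1, by have := j.2; omega⟩ - u ⟨j.1, by have := j.2; omega⟩| - γ j) 0 :=
      Finset.sum_le_sum fun j _ => htv j
    linarith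
  exact absurd (hu v) (not_le.mpr hJv)
end
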